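/- arXiv:0801.0069 — 2 statements merged into one kernel-verified Lean document; each statement's English description precedes it below -/
import Mathlib

section
/- If f is an even function and g is an odd function on R_q, then for z ∈ R_q, ∂_q(fg)(z) = q·∂_q(f)(qz)·g(z) + f(qz)·∂_q(g)(z), and also ∂_q(fg)(z) = ∂_q(g)(z)·f(z) + q·g(qz)·∂_q(f)(qz). -/
open Complex Filter

noncomputable section

/-- Infinite q-Pochhammer symbol `(a;q)_∞`, real version. -/
def qPochR (a q : ℝ) : ℝ := ∏' k : ℕ, (1 - a * q ^ k)

/-- Infinite q-Pochhammer symbol `(a;q)_∞`, complex version. -/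
def qPochC (a q : ℂ) : ℂ := ∏' k : ℕ, (1 - a * q ^ k)

/-- q-Gamma function, complex argument. -/
def qGammaC (q : ℝ) (x : ℂ) : ℂ :=
  qPochC (q : ℂ) (q : ℂ) * (1 - (q : ℂ)) ^ ((1 : ℂ) - x) / qPochC ((q : ℂ) ^ x) (q : ℂ)

/-- q-Gamma function, real argument. -/
def qGammaR (q x : ℝ) : ℝ := qPochR q q * (1 - q) ^ (1 - x) / qPochR (q ^ x) q

/-- q-number `[x]_q`, complex. -/
def qNumC (q : ℝ) (x : ℂ) : ℂ := (1 - (q : ℂ) ^ x) / (1 - (q : ℂ))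

/-- q-number `[x]_q`, real. -/
def qNumR (q x : ℝ) : ℝ := (1 - q ^ x) / (1 - q)

/-- q-factorial `[n]_q! = (q;q)_n / (1-q)^n`. -/
def qFact (q : ℝ) (n : ℕ) : ℝ := (∏ k ∈ Finset.range n, (1 - q ^ (k + 1))) / (1 - q) ^ n

/-- q-cosine. -/
def qCos (q : ℝ) (x : ℂ) : ℂ :=
  ∑' n : ℕ, (-1 : ℂ) ^ n * (q : ℂ) ^ (n * (n + 1)) * x ^ (2 * n) / (qFact q (2 * n) : ℂ)

/-- q-sine. -/
def qSin (q : ℝ) (x : ℂ) : ℂ :=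
  ∑' n : ℕ, (-1 : ℂ) ^ n * (q : ℂ) ^ (n * (n + 1)) * x ^ (2 * n + 1) / (qFact q (2 * n + 1) : ℂ)

/-- q-exponential `e(z;q²)`. -/
def qExp (q : ℝ) (z : ℂ) : ℂ := qCos q (-I * z) + I * qSin q (-I * z)

/-- The q²-analogue differential operator `∂_q`. -/
def Dq (q : ℝ) (f : ℝ → ℂ) (z : ℝ) : ℂ :=
  (f (q⁻¹ * z) + f (-(q⁻¹ * z)) - f (q * z) + f (-(q * z)) - 2 * f (-z)) /
    ((2 * (1 - q) * z : ℝ) : ℂ)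

/-- Iterated `∂_q`. -/
def DqIter (q : ℝ) (f : ℝ → ℂ) : ℕ → ℝ → ℂ
  | 0 => f
  | n + 1 => Dq q (DqIter q f n)

/-- Even part of a function. -/
def feP (f : ℝ → ℂ) (x : ℝ) : ℂ := (f x + f (-x)) / 2

/-- Odd part of a function. -/
def foP (f : ℝ → ℂ) (x : ℝ) : ℂ := (f x - f (-x)) / 2

/-- The set `R_q = {±q^n : n ∈ ℤ}`. -/
def Rq (q : ℝ) : Set ℝ := {x | ∃ n : ℤ, x = q ^ n ∨ x = -(q ^ n)}

/-- The set `R_{q,+} = {q^n : n ∈ ℤ}`. -/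
def RqPos (q : ℝ) : Set ℝ := {x | ∃ n : ℤ, x = q ^ n}

/-- q-Jackson integral `∫_0^∞ f(t) d_q t`. -/
def qIntPos (q : ℝ) (f : ℝ → ℂ) : ℂ :=
  ((1 - q : ℝ) : ℂ) * ∑' n : ℤ, ((q ^ n : ℝ) : ℂ) * f (q ^ n)

/-- Bilateral q-Jackson integral `∫_{-∞}^∞ f(t) d_q t`. -/
def qIntR (q : ℝ) (f : ℝ → ℂ) : ℂ :=
  ((1 - q : ℝ) : ℂ) * ∑' n : ℤ, ((q ^ n : ℝ) : ℂ) * (f (q ^ n) + f (-(q ^ n)))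

/-- q-Jackson integral `∫_{-a}^a f(t) d_q t`. -/
def qIntSym (q a : ℝ) (f : ℝ → ℂ) : ℂ :=
  (((1 - q) * a : ℝ) : ℂ) * ∑' n : ℕ, ((q ^ n : ℝ) : ℂ) * (f (a * q ^ n) + f (-(a * q ^ n)))

/-- q-Jackson integral `∫_{-1}^1 f(t) d_q t`. -/
def qIntPM1 (q : ℝ) (f : ℝ → ℂ) : ℂ :=
  ((1 - q : ℝ) : ℂ) * ∑' n : ℕ, ((q ^ n : ℝ) : ℂ) * (f (q ^ n) + f (-(q ^ n)))

/-- Normalized q-Bessel function `j_α(x;q²)`. -/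
def jq (q α : ℝ) (x : ℂ) : ℂ :=
  ∑' n : ℕ, (-1 : ℂ) ^ n * ((qGammaR (q ^ 2) (α + 1) : ℝ) : ℂ) * (q : ℂ) ^ (n * (n + 1)) *
      x ^ (2 * n) /
    ((((1 + q) ^ (2 * n) * qGammaR (q ^ 2) (α + (n : ℝ) + 1) * qGammaR (q ^ 2) ((n : ℝ) + 1) : ℝ)) : ℂ)

/-- The operator `H_{α,q}`. -/
def qH (q α : ℝ) (f : ℝ → ℂ) (x : ℝ) : ℂ := feP f x + ((q ^ (2 * α + 1) : ℝ) : ℂ) * foP f x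

/-- The q-Dunkl operator `Λ_{α,q}`. -/
def qDunkl (q α : ℝ) (f : ℝ → ℂ) (x : ℝ) : ℂ :=
  Dq q (qH q α f) x + ((qNumR q (2 * α + 1) : ℝ) : ℂ) * (f x - f (-x)) / ((2 * x : ℝ) : ℂ)

/-- The q-Dunkl kernel `ψ_λ^{α,q}`. -/
def qPsi (q α : ℝ) (lam : ℂ) (x : ℝ) : ℂ :=
  jq q α (lam * x) + I * lam * x / ((qNumR q (2 * α + 2) : ℝ) : ℂ) * jq q (α + 1) (lam * x)

/-- The q-Bessel operator `Δ_{α,q}`. -/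
def qDelta (q α : ℝ) (f : ℝ → ℂ) (x : ℝ) : ℂ :=
  ((|x| ^ (-(2 * α + 1)) : ℝ) : ℂ) * Dq q (fun t => ((|t| ^ (2 * α + 1) : ℝ) : ℂ) * f t) x

/-- The weight `W_α(t;q²)`. -/
def qW (α q t : ℝ) : ℝ := qPochR (t ^ 2 * q ^ 2) (q ^ 2) / qPochR (t ^ 2 * q ^ (2 * α + 1)) (q ^ 2)

/-- The constant `C(α;q²)`. -/
def qC (α q : ℝ) : ℝ :=
  (1 + q) * qGammaR (q ^ 2) (α + 1) / (qGammaR (q ^ 2) (1 / 2) * qGammaR (q ^ 2) (α + 1 / 2))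

/-- The constant `c_{α,q}`. -/
def cB (α q : ℝ) : ℝ := (1 + q) ^ (-α) / qGammaR (q ^ 2) (α + 1)

/-- The q-Dunkl intertwining operator `V_{α,q}`. -/
def Vq (q α : ℝ) (f : ℝ → ℂ) (x : ℝ) : ℂ :=
  ((qC α q / 2 : ℝ) : ℂ) * qIntPM1 q (fun t => ((qW α q t * (1 + t) : ℝ) : ℂ) * f (x * t))

/-- Membership in `L¹_{α,q}(R_{q,+})`. -/
def MemL1Pos (q α : ℝ) (f : ℝ → ℂ) : Prop :=
  Summable fun n : ℤ => (q ^ n : ℝ) * ‖f (q ^ n)‖ * ((q : ℝ) ^ n) ^ (2 * α + 1)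

/-- The q-Bessel Fourier transform `F_{α,q}`. -/
def FB (q α : ℝ) (f : ℝ → ℂ) (lam : ℝ) : ℂ :=
  ((cB α q : ℝ) : ℂ) * qIntPos q (fun x => f x * jq q α ((lam * x : ℝ) : ℂ) * ((x ^ (2 * α + 1) : ℝ) : ℂ))

/-- The space `E_q(R_q)` of q-smooth functions. -/
def MemEq (q : ℝ) (f : ℝ → ℂ) : Prop :=
  (∀ n : ℕ, ∀ a : ℝ, 0 ≤ a → ∃ C : ℝ, ∀ x ∈ Rq q ∩ Set.Icc (-a) a, ‖DqIter q f n x‖ ≤ C) ∧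
    ∀ n : ℕ, ∃ L : ℂ, Tendsto (DqIter q f n) (nhdsWithin 0 (Rq q)) (nhds L)

/-- q-Leibniz rules for an even `f` and an odd `g`. -/
theorem Dq_mul_even_odd (q : ℝ) (hq0 : 0 < q) (hq1 : q < 1) (f g : ℝ → ℂ)
    (hf : ∀ x : ℝ, f (-x) = f x) (hg : ∀ x : ℝ, g (-x) = -g x) (z : ℝ) (hz : z ∈ Rq q) :
    Dq q (fun x => f x * g x) z = (q : ℂ) * Dq q f (q * z) * g z + f (q * z) * Dq q g z ∧
    Dq q (fun x => f x * g x) z = Dq q g z * f z + (q : ℂ) * g (q * z) * Dq q f (q * z) := by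
  have hqne : q ≠ 0 := hq0.ne'
  have hz0 : z ≠ 0 := by
    obtain ⟨n, h | h⟩ := hz <;> subst h <;>
      simpa using zpow_ne_zero n hqne
  have e1 : q⁻¹ * (q * z) = z := by field_simp
  have e2 : q * (q * z) = q * (q * z) := rfl
  have hqc : (q : ℂ) ≠ 0 := by exact_mod_cast hqne
  have h1q : (1 : ℂ) - (q : ℂ) ≠ 0 := by
    have : (1 : ℝ) - q ≠ 0 := by linarith
    intro h
    apply this
    exact_mod_cast h
  have hzc : (z : ℂ) ≠ 0 := by exact_mod_cast hz0
  unfold Dq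
  simp only [e1, hf, hg]
  push_cast
  constructor <;> [skip; skip] <;> field_simp <;> ring

end
end

section
/- (q-integration by parts on ℝ_q) If the q-integral ∫_{-∞}^∞ (∂_q f)(x) g(x) d_q x converges absolutely and ∫_{-∞}^∞ f(x)(∂_q g)(x) d_q x converges absolutely, and the boundary terms vanish appropriately, then ∫_{-∞}^∞ (∂_q f)(x) g(x) d_q x = -∫_{-∞}^∞ f(x) (∂_q g)(x) d_q x. -/
/-!
By the definition of `∂_q`, for `z ≠ 0` the symmetrised integrand
`z · Σ_{±} (∂_q f · g + f · ∂_q g)(±z)` equals `2/(1-q) · (B(z) - B(qz))`, where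
`B(x) = f_e(x/q) g_o(x) + f_o(x) g_e(x/q)` is built from the even and odd parts of `f`
and `g`. So along `z = q^n`, `n ∈ ℤ`, the Jackson sum of `∂_q f · g + f · ∂_q g` telescopes:
its symmetric partial sums are `B(q^{-N}) - B(q^{N+1})` up to the constant, and these tend
to zero.
-/

open Complex Filter

noncomputable section

theorem Finset.sum_Ico_int_sub_succ {E : Type*} [AddCommGroup E] (T : ℤ → E) {a b : ℤ}
    (hab : a ≤ b) : ∑ n ∈ Finset.Ico a b, (T n - T (n + 1)) = T a - T b := by
  induction b, hab using Int.leInduction with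
  | base => simp
  | succ b hab ih =>
    rw [Finset.Ico_add_one_right_eq_Icc, ← Finset.Ico_insert_right hab,
      Finset.sum_insert Finset.right_notMem_Ico, ih]
    abel

theorem HasSum.eq_zero_of_telescoping {E : Type*} [AddCommGroup E] [TopologicalSpace E]
    [IsTopologicalAddGroup E] [T2Space E] {T : ℤ → E} {s : E}
    (hs : HasSum (fun n => T n - T (n + 1)) s)
    (hbot : Tendsto (fun m : ℕ => T (-(m : ℤ))) atTop (nhds 0))
    (htop : Tendsto (fun m : ℕ => T (m : ℤ)) atTop (nhds 0)) : s = 0 := by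
  have hpartial : Tendsto (fun N : ℕ => ∑ n ∈ Finset.Icc (-(N : ℤ)) N, (T n - T (n + 1)))
      atTop (nhds s) :=
    hs.comp (Finset.tendsto_Icc_neg_atTop_atTop.comp tendsto_natCast_atTop_atTop)
  have hboundary :
      Tendsto (fun N : ℕ => T (-(N : ℤ)) - T ((N + 1 : ℕ) : ℤ)) atTop (nhds 0) := by
    simpa using hbot.sub (htop.comp (tendsto_add_atTop_nat 1))
  refine tendsto_nhds_unique hpartial (hboundary.congr fun N => ?_)
  rw [← Finset.Ico_add_one_right_eq_Icc, Finset.sum_Ico_int_sub_succ T (by omega)]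
  push_cast
  rfl

def qIntRTerm (q : ℝ) (h : ℝ → ℂ) (n : ℤ) : ℂ :=
  ((q ^ n : ℝ) : ℂ) * (h (q ^ n) + h (-(q ^ n)))

theorem qIntR_eq_tsum (q : ℝ) (h : ℝ → ℂ) :
    qIntR q h = ((1 - q : ℝ) : ℂ) * ∑' n : ℤ, qIntRTerm q h n :=
  rfl

theorem summable_qIntRTerm {q : ℝ} (hq : 0 ≤ q) {h : ℝ → ℂ}
    (hs : Summable fun n : ℤ => (q ^ n : ℝ) * (‖h (q ^ n)‖ + ‖h (-(q ^ n))‖)) :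
    Summable (qIntRTerm q h) := by
  refine hs.of_norm_bounded fun n => ?_
  rw [qIntRTerm, norm_mul, Complex.norm_real, Real.norm_of_nonneg (zpow_nonneg hq n)]
  gcongr
  exact norm_add_le _ _

def qBoundary (q : ℝ) (f g : ℝ → ℂ) (x : ℝ) : ℂ :=
  feP f (x / q) * foP g x + foP f x * feP g (x / q)

theorem Dq_mul_add_mul_Dq_eq_qBoundary_sub {q : ℝ} (hq0 : q ≠ 0) (hq1 : q ≠ 1)
    (f g : ℝ → ℂ) {z : ℝ} (hz : z ≠ 0) :
    (z : ℂ) * ((Dq q f z * g z + Dq q f (-z) * g (-z)) +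
        (f z * Dq q g z + f (-z) * Dq q g (-z))) =
      ((2 / (1 - q) : ℝ) : ℂ) * (qBoundary q f g z - qBoundary q f g (q * z)) := by
  have hzC : (z : ℂ) ≠ 0 := by exact_mod_cast hz
  have hqC : (q : ℂ) ≠ 0 := by exact_mod_cast hq0
  have h1qC : (1 : ℂ) - q ≠ 0 := sub_ne_zero.mpr (by exact_mod_cast hq1.symm)
  rw [qBoundary, qBoundary, mul_div_cancel_left₀ z hq0, div_eq_inv_mul]
  simp only [Dq, feP, foP, mul_neg, neg_neg]
  push_cast
  field_simp
  ring

theorem qIntRTerm_Dq_mul_add_mul_Dq_eq {q : ℝ} (hq0 : q ≠ 0) (hq1 : q ≠ 1) (f g : ℝ → ℂ)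
    (n : ℤ) :
    qIntRTerm q (fun x => Dq q f x * g x) n + qIntRTerm q (fun x => f x * Dq q g x) n =
      ((2 / (1 - q) : ℝ) : ℂ) * qBoundary q f g (q ^ n) -
        ((2 / (1 - q) : ℝ) : ℂ) * qBoundary q f g (q ^ (n + 1)) := by
  rw [zpow_add_one₀ hq0, mul_comm _ q, ← mul_sub,
    ← Dq_mul_add_mul_Dq_eq_qBoundary_sub hq0 hq1 f g (zpow_ne_zero n hq0), qIntRTerm, qIntRTerm]
  ring

/-- q-integration by parts on ℝ_q. -/
theorem qIntR_by_parts (q : ℝ) (hq0 : 0 < q) (hq1 : q < 1) (f g : ℝ → ℂ)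
    (h1 : Summable fun n : ℤ =>
      (q ^ n : ℝ) * (‖Dq q f (q ^ n) * g (q ^ n)‖ + ‖Dq q f (-(q ^ n)) * g (-(q ^ n))‖))
    (h2 : Summable fun n : ℤ =>
      (q ^ n : ℝ) * (‖f (q ^ n) * Dq q g (q ^ n)‖ + ‖f (-(q ^ n)) * Dq q g (-(q ^ n))‖))
    (hBinf : Tendsto
      (fun m : ℕ => feP f (q ^ (-(m : ℤ)) / q) * foP g (q ^ (-(m : ℤ))) +
        foP f (q ^ (-(m : ℤ))) * feP g (q ^ (-(m : ℤ)) / q)) atTop (nhds 0))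
    (hB0 : Tendsto
      (fun m : ℕ => feP f (q ^ (m : ℤ) / q) * foP g (q ^ (m : ℤ)) +
        foP f (q ^ (m : ℤ)) * feP g (q ^ (m : ℤ) / q)) atTop (nhds 0)) :
    qIntR q (fun x => Dq q f x * g x) = -qIntR q (fun x => f x * Dq q g x) := by
  set c : ℂ := ((2 / (1 - q) : ℝ) : ℂ)
  have hsum : HasSum
      (fun n : ℤ => c * qBoundary q f g (q ^ n) - c * qBoundary q f g (q ^ (n + 1)))
      (∑' n, qIntRTerm q (fun x => Dq q f x * g x) n +
        ∑' n, qIntRTerm q (fun x => f x * Dq q g x) n) := by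
    simpa only [qIntRTerm_Dq_mul_add_mul_Dq_eq hq0.ne' hq1.ne] using
      (summable_qIntRTerm (h := fun x => Dq q f x * g x) hq0.le h1).hasSum.add
        (summable_qIntRTerm (h := fun x => f x * Dq q g x) hq0.le h2).hasSum
  have hzero := hsum.eq_zero_of_telescoping (mul_zero c ▸ hBinf.const_mul c)
    (mul_zero c ▸ hB0.const_mul c)
  rw [qIntR_eq_tsum, qIntR_eq_tsum]
  linear_combination ((1 - q : ℝ) : ℂ) * hzero

end
end
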